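/- arXiv:2508.03335 — 2 statements merged into one kernel-verified Lean document; each statement's English description precedes it below -/
import Mathlib

section
/- For all integers w ≥ 0, k ≥ 1 and p ≥ p_{w,k}, the graph G^k_{w,p} contains every graph with at most γ(w,p) vertices and treewidth at most k. -/
open SimpleGraph

def Contains {V W : Type*} (U : SimpleGraph V) (G : SimpleGraph W) : Prop :=
  ∃ f : G →g U, Function.Injective f

def IsWSubtree {V : Type*} (F : SimpleGraph V) (W : Set V) (H : F.Subgraph) : Prop :=
  H.coe.IsTree ∧ (∀ w ∈ W, (H.neighborSet w).Subsingleton) ∧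
    ∀ H' : F.Subgraph, H ≤ H' → H'.coe.IsTree →
      (∀ w ∈ W, (H'.neighborSet w).Subsingleton) → H' = H

noncomputable def ratio (w : ℕ) : ℝ := (2 + (2/3 : ℝ) ^ w) / (1 + (2/3 : ℝ) ^ w)
noncomputable def alphaF (w p : ℕ) : ℝ := (1 / (1 + (2/3 : ℝ) ^ w)) * ratio w ^ (p - 1)
noncomputable def betaF (w : ℕ) : ℝ := 3 * (3/2 : ℝ) ^ w
noncomputable def gammaF (w p : ℕ) : ℝ := ratio w ^ p
noncomputable def deltaF (w : ℕ) : ℝ := (2 + (2/3 : ℝ) ^ w) * betaF w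
noncomputable def pW (w : ℕ) : ℕ := sInf {p : ℕ | betaF w ≤ alphaF w (p + 1)}

noncomputable def betaK (k w : ℕ) : ℝ := (2 * k + 4) * (3/2 : ℝ) ^ w
noncomputable def deltaK (k w : ℕ) : ℝ := (2 + (2/3 : ℝ) ^ w) * betaK k w
noncomputable def pWK (k w : ℕ) : ℕ := sInf {p : ℕ | betaK k w ≤ alphaF w (p + 1)}

def JVert (a b : ℕ) : ℕ → Type
  | 0 => Fin b
  | m + 1 => Fin a ⊕ (JVert a b m ⊕ JVert a b m)

def JGraph (a b : ℕ) : (m : ℕ) → SimpleGraph (JVert a b m)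
  | 0 => ⊤
  | m + 1 => SimpleGraph.fromRel (fun u v =>
      match u, v with
      | Sum.inl _, _ => True
      | Sum.inr (Sum.inl x), Sum.inr (Sum.inl y) => (JGraph a b m).Adj x y
      | Sum.inr (Sum.inr x), Sum.inr (Sum.inr y) => (JGraph a b m).Adj x y
      | _, _ => False)

noncomputable def GwpVert (w p : ℕ) : Type := JVert (w + 1) ⌈deltaF w⌉₊ (p - pW w)
noncomputable def Gwp (w p : ℕ) : SimpleGraph (GwpVert w p) := JGraph _ _ _

noncomputable def GkwpVert (k w p : ℕ) : Type := JVert ((k + 1) * (w + 1)) ⌈deltaK k w⌉₊ (p - pWK k w)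
noncomputable def Gkwp (k w p : ℕ) : SimpleGraph (GkwpVert k w p) := JGraph _ _ _

structure TreeDecomp {V : Type*} {ι : Type*} (G : SimpleGraph V) (T : SimpleGraph ι) where
  isTree : T.IsTree
  bag : ι → Set V
  bag_connected : ∀ v : V, (T.induce {x | v ∈ bag x}).Connected
  bag_edge : ∀ ⦃u v : V⦄, G.Adj u v → ∃ x, u ∈ bag x ∧ v ∈ bag x

def HasTreewidthLE {V : Type*} (G : SimpleGraph V) (k : ℕ) : Prop :=
  ∃ (ι : Type) (T : SimpleGraph ι) (td : TreeDecomp G T), ∀ x, (td.bag x).ncard ≤ k + 1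


namespace UnivProof
variable {α : Type*}
def Conn (G : SimpleGraph α) (W : Set α) : α → α → Prop :=
  Relation.ReflTransGen (fun a b => G.Adj a b ∧ a ∈ W ∧ b ∈ W)
theorem Conn.refl (G : SimpleGraph α) (W : Set α) (a : α) : Conn G W a a := Relation.ReflTransGen.refl
theorem Conn.trans {G : SimpleGraph α} {W : Set α} {a b c : α}
    (h1 : Conn G W a b) (h2 : Conn G W b c) : Conn G W a c := Relation.ReflTransGen.trans h1 h2
theorem Conn.symm' {G : SimpleGraph α} {W : Set α} {a b : α}
    (h : Conn G W a b) : Conn G W b a := by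
  have hsym : Symmetric (fun a b => G.Adj a b ∧ a ∈ W ∧ b ∈ W) := by
    intro x y ⟨h1, h2, h3⟩; exact ⟨h1.symm, h3, h2⟩
  haveI : Std.Symm (fun a b => G.Adj a b ∧ a ∈ W ∧ b ∈ W) := ⟨fun _ _ h => hsym h⟩
  exact (Relation.ReflTransGen.symmetric (r := fun a b => G.Adj a b ∧ a ∈ W ∧ b ∈ W)).symm _ _ h
theorem Conn.single {G : SimpleGraph α} {W : Set α} {a b : α}
    (h : G.Adj a b) (ha : a ∈ W) (hb : b ∈ W) : Conn G W a b := Relation.ReflTransGen.single ⟨h, ha, hb⟩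
theorem Conn.mem_right {G : SimpleGraph α} {W : Set α} {a b : α}
    (ha : a ∈ W) (h : Conn G W a b) : b ∈ W := by
  induction h with
  | refl => exact ha
  | tail _ h2 _ => exact h2.2.2
theorem Conn.mono {G : SimpleGraph α} {W W' : Set α} {a b : α}
    (h : Conn G W a b) (hsub : ∀ c, Conn G W a c → c ∈ W') : Conn G W' a b := by
  induction h with
  | refl => exact Conn.refl _ _ _
  | tail h1 h2 ih =>
      refine Conn.trans ih (Conn.single h2.1 ?_ ?_)
      · exact hsub _ h1
      · exact hsub _ (h1.tail h2)
theorem Conn.mono_set {G : SimpleGraph α} {W W' : Set α} {a b : α}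
    (hWW : W ⊆ W') (h : Conn G W a b) : Conn G W' a b := by
  induction h with
  | refl => exact Conn.refl _ _ _
  | tail _ h2 ih => exact Conn.trans ih (Conn.single h2.1 (hWW h2.2.1) (hWW h2.2.2))
def cc (G : SimpleGraph α) (W : Set α) (v : α) : Set α := {u | Conn G W v u}
theorem mem_cc_self (G : SimpleGraph α) (W : Set α) (v : α) : v ∈ cc G W v := Conn.refl _ _ _
theorem cc_subset {G : SimpleGraph α} {W : Set α} {v : α} (hv : v ∈ W) :
    cc G W v ⊆ W := fun _ h => Conn.mem_right hv h
theorem cc_eq_of_mem {G : SimpleGraph α} {W : Set α} {v u : α}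
    (h : u ∈ cc G W v) : cc G W u = cc G W v := by
  ext z
  exact ⟨fun hz => Conn.trans h hz, fun hz => Conn.trans (Conn.symm' h) hz⟩
theorem conn_of_walk {G : SimpleGraph α} {W : Set α} {a b : α}
    (p : G.Walk a b) (hp : ∀ z ∈ p.support, z ∈ W) : Conn G W a b := by
  induction p with
  | nil => exact Conn.refl _ _ _
  | @cons u v w h q ih =>
      refine Conn.trans (Conn.single h ?_ ?_) (ih ?_)
      · exact hp u (SimpleGraph.Walk.start_mem_support _)
      · exact hp v (by simp [SimpleGraph.Walk.support_cons])
      · intro z hz; exact hp z (by simp [SimpleGraph.Walk.support_cons, hz])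
theorem walk_of_conn {G : SimpleGraph α} {W : Set α} {a b : α}
    (h : Conn G W a b) (ha : a ∈ W) :
    ∃ p : G.Walk a b, ∀ z ∈ p.support, z ∈ W := by
  induction h with
  | refl => exact ⟨SimpleGraph.Walk.nil, by simp [ha]⟩
  | @tail c d h1 h2 ih =>
      obtain ⟨p, hp⟩ := ih
      refine ⟨p.concat h2.1, ?_⟩
      intro z hz
      rw [SimpleGraph.Walk.support_concat, List.mem_append] at hz
      rcases hz with hz | hz
      · exact hp z hz
      · simp at hz; subst hz; exact h2.2.2
theorem conn_of_induce_connected {G : SimpleGraph α} {S : Set α}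
    (h : (G.induce S).Connected) {a b : α} (ha : a ∈ S) (hb : b ∈ S) :
    Conn G S a b := by
  obtain ⟨p⟩ := h.preconnected ⟨a, ha⟩ ⟨b, hb⟩
  clear h
  generalize hA : (⟨a, ha⟩ : S) = A at p
  generalize hB : (⟨b, hb⟩ : S) = B at p
  have key : ∀ (x y : S), (G.induce S).Walk x y → Conn G S x.1 y.1 := by
    intro x y q
    induction q with
    | nil => exact Conn.refl _ _ _
    | @cons u v w h q ih => exact Conn.trans (Conn.single h u.2 v.2) ih
  have := key A B p
  rw [← hA, ← hB] at this
  exact this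
theorem tree_sides_disjoint {T : SimpleGraph α} (htree : T.IsTree) {t t' u : α}
    (hadj : T.Adj t t') (h1 : Conn T {t}ᶜ t' u) (h2 : Conn T {t'}ᶜ t u) : False := by
  classical
  obtain ⟨w1, hw1⟩ := walk_of_conn h1 (by simpa using hadj.ne')
  obtain ⟨w2, hw2⟩ := walk_of_conn h2 (by simpa using hadj.ne)
  have huniq := (SimpleGraph.isTree_iff_existsUnique_path.mp htree).2 t' u
  set p1 := w1.toPath with hp1
  set p2 := w2.toPath with hp2
  have ht_not_p1 : t ∉ (p1 : T.Walk t' u).support := by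
    intro hmem
    have := SimpleGraph.Walk.support_bypass_subset w1 hmem
    exact (hw1 t this) rfl
  have ht'_not_p2 : t' ∉ (p2 : T.Walk t u).support := by
    intro hmem
    have := SimpleGraph.Walk.support_bypass_subset w2 hmem
    exact (hw2 t' this) rfl
  have hq : (SimpleGraph.Walk.cons hadj.symm (p2 : T.Walk t u)).IsPath := by
    rw [SimpleGraph.Walk.cons_isPath_iff]
    exact ⟨p2.2, ht'_not_p2⟩
  have he1 : (p1 : T.Walk t' u) = SimpleGraph.Walk.cons hadj.symm (p2 : T.Walk t u) := by
    exact huniq.unique p1.2 hq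
  apply ht_not_p1
  rw [he1]
  simp [SimpleGraph.Walk.support_cons]

-- ### Part 2: centroid
variable {VH ι : Type} [Fintype VH] {H : SimpleGraph VH} {T : SimpleGraph ι}

theorem bag_single (td : TreeDecomp H T) {t : ι} {v : VH} (hv : v ∉ td.bag t)
    {y y' : ι} (hy : v ∈ td.bag y) (hy' : v ∈ td.bag y') : Conn T {t}ᶜ y y' := by
  refine Conn.mono_set ?_ (conn_of_induce_connected (td.bag_connected v) hy hy')
  intro x hx hxt
  simp only [Set.mem_singleton_iff] at hxt
  subst hxt
  exact hv hx

theorem bagloc (td : TreeDecomp H T) {t : ι} {W : Set VH} (hW : ∀ z ∈ W, z ∉ td.bag t)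
    {vb : VH} (hvb : vb ∈ W) {x0 : ι} (hx0 : vb ∈ td.bag x0)
    {u : VH} (hconn : Conn H W vb u) : ∀ y, u ∈ td.bag y → Conn T {t}ᶜ x0 y := by
  induction hconn with
  | refl => intro y hy; exact bag_single td (hW vb hvb) hx0 hy
  | @tail c d h1 h2 ih =>
      intro y hy
      obtain ⟨y2, hcy2, hdy2⟩ := td.bag_edge h2.1
      exact (ih y2 hcy2).trans (bag_single td (hW d h2.2.2) hdy2 hy)

theorem big_inter {U C C' : Set VH} (hCU : C ⊆ U) (hC'U : C' ⊆ U)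
    (h1 : U.ncard < 2 * C.ncard) (h2 : U.ncard < 2 * C'.ncard) : ∃ z, z ∈ C ∧ z ∈ C' := by
  by_contra hcon
  push_neg at hcon
  have hdisj : Disjoint C C' := Set.disjoint_left.mpr fun {a} ha ha' => hcon a ha ha'
  have hun : (C ∪ C').ncard = C.ncard + C'.ncard :=
    Set.ncard_union_eq hdisj (Set.toFinite _) (Set.toFinite _)
  have hle : (C ∪ C').ncard ≤ U.ncard :=
    Set.ncard_le_ncard (Set.union_subset hCU hC'U) (Set.toFinite _)
  omega

theorem exists_centroid (td : TreeDecomp H T) (U : Set VH) :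
    ∃ t : ι, ∀ v ∈ U \ td.bag t, 2 * (cc H (U \ td.bag t) v).ncard ≤ U.ncard := by
  classical
  by_contra hcon
  push_neg at hcon
  -- hcon : ∀ t, ∃ v ∈ U \ td.bag t, U.ncard < 2 * (cc H (U \ td.bag t) v).ncard
  have htree := td.isTree
  have hconnT : T.Connected := htree.isConnected
  have hne : Nonempty ι := hconnT.nonempty
  set S : Set ℕ :=
    {m | ∃ t v, v ∈ U \ td.bag t ∧ U.ncard < 2 * (cc H (U \ td.bag t) v).ncard ∧
      (cc H (U \ td.bag t) v).ncard = m} with hS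
  have hSne : S.Nonempty := by
    obtain ⟨t⟩ := hne
    obtain ⟨v, hv1, hv2⟩ := hcon t
    exact ⟨_, t, v, hv1, hv2, rfl⟩
  obtain ⟨t0, v0, hv0, hbig0, hM0⟩ := Nat.sInf_mem hSne
  set M := sInf S with hMdef
  set C0 := cc H (U \ td.bag t0) v0 with hC0
  -- v0 has a bag
  obtain ⟨⟨x0, hx0⟩⟩ : Nonempty {x | v0 ∈ td.bag x} := (td.bag_connected v0).nonempty
  -- descent claim
  have claim : ∀ d : ℕ, ∀ t : ι, v0 ∉ td.bag t → cc H (U \ td.bag t) v0 = C0 →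
      T.dist t x0 = d → False := by
    intro d
    induction d using Nat.strong_induction_on with
    | _ d ih =>
      intro t hvt hcct hdist
      by_cases hteq : t = x0
      · subst hteq; exact hvt hx0
      -- t ≠ x0, walk toward x0
      have hreach : T.Reachable t x0 := hconnT.preconnected t x0
      obtain ⟨p, hp⟩ := hreach.exists_walk_length_eq_dist
      have hq := p.bypass
      have hqlen : p.bypass.length = d := by
        have h1 := SimpleGraph.Walk.length_bypass_le p
        have h2 := SimpleGraph.dist_le p.bypass
        omega
      have hqpath : p.bypass.IsPath := SimpleGraph.Walk.bypass_isPath p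
      cases hq2 : p.bypass with
      | nil => exact hteq rfl
      | @cons _ t'' _ hadj q' =>
        rw [hq2] at hqlen hqpath
        -- q' : T.Walk t'' x0, hadj : T.Adj t t''
        rw [SimpleGraph.Walk.cons_isPath_iff] at hqpath
        obtain ⟨hq'path, htq'⟩ := hqpath
        have hlen' : q'.length = d - 1 := by
          simp [SimpleGraph.Walk.length_cons] at hqlen; omega
        have hdlt : T.dist t'' x0 < d := by
          have := SimpleGraph.dist_le q'
          simp [SimpleGraph.Walk.length_cons] at hqlen
          omega
        -- (α) x0 is on the t''-side of t
        have halpha : Conn T {t}ᶜ t'' x0 := by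
          refine conn_of_walk q' ?_
          intro z hz
          simp only [Set.mem_compl_iff, Set.mem_singleton_iff]
          intro hzt; subst hzt; exact htq' hz
        -- (β) big class at t''
        obtain ⟨u', hu', hbig'⟩ := hcon t''
        set C' := cc H (U \ td.bag t'') u' with hC'def
        have hMC' : M ≤ C'.ncard := Nat.sInf_le ⟨t'', u', hu', hbig', rfl⟩
        -- bag of u'
        obtain ⟨⟨y0', hy0'⟩⟩ : Nonempty {x | u' ∈ td.bag x} := (td.bag_connected u').nonempty
        -- localization of bags of C' (relative to t'')
        have locC' : ∀ z ∈ C', ∀ y, z ∈ td.bag y → Conn T {t''}ᶜ y0' y := by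
          intro z hz y hy
          exact bagloc td (fun a ha => ha.2) hu' hy0' hz y hy
        -- localization of bags of (cc at t) = C0 (relative to t)
        have locC0 : ∀ z ∈ cc H (U \ td.bag t) v0, ∀ y, z ∈ td.bag y → Conn T {t}ᶜ x0 y := by
          intro z hz y hy
          exact bagloc td (fun a ha => ha.2) (Set.mem_diff_of_mem hv0.1 hvt) hx0 hz y hy
        -- C0 and C' intersect
        have hC0U : C0 ⊆ U := by
          rw [hC0]; exact (cc_subset hv0).trans Set.diff_subset
        have hC'U : C' ⊆ U := (cc_subset hu').trans Set.diff_subset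
        have hbigC0 : U.ncard < 2 * C0.ncard := hbig0
        obtain ⟨vb, hvbC0, hvbC'⟩ := big_inter hC0U hC'U hbigC0 hbig'
        by_cases hcase : Conn T {t''}ᶜ y0' t
        · -- t is on the C'-side of t'': contradiction with tree structure
          obtain ⟨⟨yb, hyb⟩⟩ : Nonempty {x | vb ∈ td.bag x} := (td.bag_connected vb).nonempty
          have h1 : Conn T {t}ᶜ x0 yb := by
            rw [← hcct] at hvbC0
            exact locC0 vb hvbC0 yb hyb
          have h1' : Conn T {t}ᶜ t'' yb := halpha.trans h1
          have h2 : Conn T {t''}ᶜ y0' yb := locC' vb hvbC' yb hyb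
          have h2' : Conn T {t''}ᶜ t yb := (Conn.symm' hcase).trans h2
          exact tree_sides_disjoint htree hadj h1' h2'
        · -- C' avoids bag t entirely, hence C' ⊆ C0, hence equal, move to t''
          have hC'W : ∀ z ∈ C', z ∈ U \ td.bag t := by
            intro z hz
            refine ⟨hC'U hz, fun hzt => ?_⟩
            exact hcase (locC' z hz t hzt)
          have hC'C0 : C' ⊆ C0 := by
            intro z hz
            have hconn1 : Conn H (U \ td.bag t) u' z := Conn.mono hz (fun c hc => hC'W c hc)
            have hconn2 : Conn H (U \ td.bag t) u' vb := Conn.mono hvbC' (fun c hc => hC'W c hc)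
            have : z ∈ cc H (U \ td.bag t) vb := (Conn.symm' hconn2).trans hconn1
            rw [← hcct] at hvbC0 ⊢
            rw [cc_eq_of_mem hvbC0] at this
            exact this
          have hC'eq : C' = C0 := by
            refine Set.eq_of_subset_of_ncard_le hC'C0 ?_ (Set.toFinite _)
            rw [hM0]; exact hMC'
          -- new hypotheses at t''
          have hv0C' : v0 ∈ C' := by rw [hC'eq]; exact (hC0 ▸ mem_cc_self H _ v0)
          have hv0t'' : v0 ∉ td.bag t'' := ((cc_subset hu') hv0C').2
          have hcct'' : cc H (U \ td.bag t'') v0 = C0 := by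
            rw [← hC'eq, hC'def]
            exact cc_eq_of_mem hv0C'
          exact ih (T.dist t'' x0) hdlt t'' hv0t'' hcct'' rfl
  exact claim (T.dist t0 x0) t0 hv0.2 rfl rfl


section Pack
variable {γ : Type*}

theorem pack [DecidableEq γ] (F : Finset γ) (wt : γ → ℕ)
    (hpos : ∀ x ∈ F, 1 ≤ wt x) (r₁ r₂ s : ℝ) (h1 : 0 ≤ r₁) (h2 : 0 ≤ r₂) (hs : 0 < s)
    (hsum : (∑ x ∈ F, (wt x : ℝ)) + s ≤ r₁ + r₂) :
    (∃ P ∈ F.powerset, (∑ x ∈ P, (wt x:ℝ)) ≤ r₁ ∧ (∑ x ∈ F \ P, (wt x:ℝ)) ≤ r₂)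
    ∨ (∃ c ∈ F, ∃ P ∈ (F.erase c).powerset,
        (∑ x ∈ P, (wt x:ℝ)) ≤ r₁ ∧ (∑ x ∈ (F.erase c) \ P, (wt x:ℝ)) ≤ r₂ ∧
        (wt c : ℝ) + s ≤ (r₁ - ∑ x ∈ P, (wt x:ℝ)) + (r₂ - ∑ x ∈ (F.erase c) \ P, (wt x:ℝ)) ∧
        r₁ < (∑ x ∈ P, (wt x:ℝ)) + wt c ∧
        r₂ < (∑ x ∈ (F.erase c) \ P, (wt x:ℝ)) + wt c ∧
        ((wt c:ℝ) ≤ r₁ → (wt c:ℝ) ≤ ∑ x ∈ P, (wt x:ℝ))) := by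
  classical
  have h𝒫ne : (F.powerset.filter (fun P => (∑ x ∈ P, (wt x:ℝ)) ≤ r₁)).Nonempty :=
    ⟨∅, by simp [h1]⟩
  obtain ⟨P, hPmem, hPmax⟩ := Finset.exists_max_image _ (fun P => ∑ x ∈ P, (wt x:ℝ)) h𝒫ne
  simp only [Finset.mem_filter, Finset.mem_powerset] at hPmem hPmax
  obtain ⟨hPF, hPr⟩ := hPmem
  have h𝒬ne : (((F \ P).powerset).filter (fun Q => (∑ x ∈ Q, (wt x:ℝ)) ≤ r₂)).Nonempty :=
    ⟨∅, by simp [h2]⟩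
  obtain ⟨Q, hQmem, hQmax⟩ := Finset.exists_max_image _ (fun Q => ∑ x ∈ Q, (wt x:ℝ)) h𝒬ne
  simp only [Finset.mem_filter, Finset.mem_powerset] at hQmem hQmax
  obtain ⟨hQF, hQr⟩ := hQmem
  by_cases hZ : (F \ P) \ Q = ∅
  · left
    have hQeq : F \ P = Q := by
      apply Finset.Subset.antisymm _ hQF
      intro x hx
      by_contra hxQ
      have : x ∈ (F \ P) \ Q := Finset.mem_sdiff.mpr ⟨hx, hxQ⟩
      rw [hZ] at this; exact absurd this (Finset.notMem_empty x)
    exact ⟨P, Finset.mem_powerset.mpr hPF, hPr, by rw [hQeq]; exact hQr⟩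
  · have hzfact : ∀ z ∈ (F \ P) \ Q,
        r₁ < (∑ x ∈ P, (wt x:ℝ)) + wt z ∧ r₂ < (∑ x ∈ Q, (wt x:ℝ)) + wt z := by
      intro z hz
      rw [Finset.mem_sdiff, Finset.mem_sdiff] at hz
      obtain ⟨⟨hzF, hzP⟩, hzQ⟩ := hz
      have hwz : (1:ℝ) ≤ wt z := by exact_mod_cast hpos z hzF
      constructor
      · by_contra hle
        push_neg at hle
        have := hPmax (insert z P)
          ⟨Finset.insert_subset hzF hPF, by rw [Finset.sum_insert hzP]; linarith⟩
        rw [Finset.sum_insert hzP] at this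
        linarith
      · by_contra hle
        push_neg at hle
        have := hQmax (insert z Q)
          ⟨Finset.insert_subset (Finset.mem_sdiff.mpr ⟨hzF, hzP⟩) hQF,
           by rw [Finset.sum_insert hzQ]; linarith⟩
        rw [Finset.sum_insert hzQ] at this
        linarith
    obtain ⟨c, hc⟩ := Finset.nonempty_iff_ne_empty.mpr hZ
    have hZsing : (F \ P) \ Q = {c} := by
      apply Finset.eq_singleton_iff_unique_mem.mpr
      refine ⟨hc, ?_⟩
      intro z hz
      by_contra hzc
      have hfact1 := hzfact c hc
      have hfact2 := hzfact z hz
      have hsum_split : (∑ x ∈ F \ P, (wt x:ℝ)) + ∑ x ∈ P, (wt x:ℝ) = ∑ x ∈ F, (wt x:ℝ) :=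
        Finset.sum_sdiff hPF
      have hQZ : (∑ x ∈ (F \ P) \ Q, (wt x:ℝ)) + ∑ x ∈ Q, (wt x:ℝ)
          = ∑ x ∈ F \ P, (wt x:ℝ) := Finset.sum_sdiff hQF
      have hpair : (wt z : ℝ) + wt c ≤ ∑ x ∈ (F \ P) \ Q, (wt x:ℝ) := by
        have hsub : {z, c} ⊆ (F \ P) \ Q := by
          intro x hx; simp at hx; rcases hx with h | h <;> subst h <;> assumption
        have := Finset.sum_le_sum_of_subset_of_nonneg hsub
          (fun i _ _ => by positivity : ∀ i ∈ (F \ P) \ Q, i ∉ ({z, c} : Finset γ) → (0:ℝ) ≤ wt i)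
        rw [Finset.sum_pair hzc] at this
        exact this
      linarith [hfact1.1, hfact2.2]
    have hcZ := hc
    rw [Finset.mem_sdiff, Finset.mem_sdiff] at hcZ
    obtain ⟨⟨hcF, hcP⟩, hcQ⟩ := hcZ
    have hQeq : (F.erase c) \ P = Q := by
      ext x
      simp only [Finset.mem_sdiff, Finset.mem_erase]
      constructor
      · rintro ⟨⟨hxc, hxF⟩, hxP⟩
        by_contra hxQ
        have : x ∈ (F \ P) \ Q := by simp [Finset.mem_sdiff, hxF, hxP, hxQ]
        rw [hZsing] at this; simp at this; exact hxc this
      · intro hxQ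
        have hx1 := hQF hxQ
        rw [Finset.mem_sdiff] at hx1
        refine ⟨⟨?_, hx1.1⟩, hx1.2⟩
        rintro rfl; exact hcQ hxQ
    have hPsub : P ⊆ F.erase c := by
      intro x hx
      rw [Finset.mem_erase]
      exact ⟨fun h => hcP (h ▸ hx), hPF hx⟩
    have htotal : (∑ x ∈ P, (wt x:ℝ)) + (∑ x ∈ Q, (wt x:ℝ)) + wt c = ∑ x ∈ F, (wt x:ℝ) := by
      have h1' : (∑ x ∈ F.erase c, (wt x:ℝ)) + wt c = ∑ x ∈ F, (wt x:ℝ) :=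
        Finset.sum_erase_add F _ hcF
      have h2' : (∑ x ∈ (F.erase c) \ P, (wt x:ℝ)) + ∑ x ∈ P, (wt x:ℝ)
          = ∑ x ∈ F.erase c, (wt x:ℝ) := Finset.sum_sdiff hPsub
      rw [hQeq] at h2'
      linarith
    right
    refine ⟨c, hcF, P, Finset.mem_powerset.mpr hPsub, hPr, by rw [hQeq]; exact hQr, ?_, ?_, ?_, ?_⟩
    · rw [hQeq]; linarith
    · exact (hzfact c hc).1
    · rw [hQeq]; exact (hzfact c hc).2
    · intro hcr
      have := hPmax {c} ⟨by simpa using hcF, by simpa using hcr⟩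
      rw [Finset.sum_singleton] at this
      exact this


end Pack

section Comps
variable {α : Type*}
def compSet (G : SimpleGraph α) (W : Set α) : Set (Set α) := {C | ∃ v ∈ W, C = cc G W v}

theorem compSet_subset {G : SimpleGraph α} {W : Set α} {C : Set α}
    (hC : C ∈ compSet G W) : C ⊆ W := by
  obtain ⟨v, hv, rfl⟩ := hC; exact cc_subset hv

theorem compSet_nonempty {G : SimpleGraph α} {W : Set α} {C : Set α}
    (hC : C ∈ compSet G W) : C.Nonempty := by
  obtain ⟨v, hv, rfl⟩ := hC; exact ⟨v, mem_cc_self _ _ _⟩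

theorem compSet_disjoint {G : SimpleGraph α} {W : Set α} {C C' : Set α}
    (hC : C ∈ compSet G W) (hC' : C' ∈ compSet G W) (hne : C ≠ C') : Disjoint C C' := by
  rw [Set.disjoint_left]
  intro x hx hx'
  obtain ⟨v, hv, rfl⟩ := hC
  obtain ⟨v', hv', rfl⟩ := hC'
  exact hne ((cc_eq_of_mem hx).symm.trans (cc_eq_of_mem hx'))

theorem compSet_not_adj {G : SimpleGraph α} {W : Set α} {C C' : Set α}
    (hC : C ∈ compSet G W) (hC' : C' ∈ compSet G W) (hne : C ≠ C')
    {a b : α} (ha : a ∈ C) (hb : b ∈ C') (hadj : G.Adj a b) : False := by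
  have haW : a ∈ W := compSet_subset hC ha
  have hbW : b ∈ W := compSet_subset hC' hb
  obtain ⟨v, hv, rfl⟩ := hC
  obtain ⟨v', hv', rfl⟩ := hC'
  have : b ∈ cc G W v := Relation.ReflTransGen.trans ha (Conn.single hadj haW hbW)
  exact hne ((cc_eq_of_mem this).symm.trans (cc_eq_of_mem hb))

theorem compSet_sUnion {G : SimpleGraph α} (W : Set α) : ⋃₀ (compSet G W) = W := by
  apply Set.Subset.antisymm
  · intro x hx
    obtain ⟨C, hC, hxC⟩ := hx
    exact compSet_subset hC hxC
  · intro x hx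
    exact ⟨cc G W x, ⟨x, hx, rfl⟩, mem_cc_self _ _ _⟩

theorem ncard_sUnion_finset [Finite α] (F : Finset (Set α))
    (hdisj : ∀ C ∈ F, ∀ C' ∈ F, C ≠ C' → Disjoint C C') :
    (⋃₀ (↑F : Set (Set α))).ncard = ∑ C ∈ F, C.ncard := by
  classical
  induction F using Finset.induction_on with
  | empty => simp
  | @insert C F hCF ih =>
      rw [Finset.coe_insert, Set.sUnion_insert, Finset.sum_insert hCF]
      rw [Set.ncard_union_eq ?_ (Set.toFinite _) (Set.toFinite _)]
      · rw [ih (fun C1 h1 C2 h2 hne => hdisj C1 (Finset.mem_insert_of_mem h1)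
          C2 (Finset.mem_insert_of_mem h2) hne)]
      · rw [Set.disjoint_sUnion_right]
        intro t ht
        rw [Finset.mem_coe] at ht
        exact hdisj C (Finset.mem_insert_self _ _) t (Finset.mem_insert_of_mem ht)
          (fun h => hCF (h ▸ ht))


end Comps

section Split
variable {VH ι : Type} [Fintype VH] {H : SimpleGraph VH} {T : SimpleGraph ι}

theorem split (td : TreeDecomp H T) {k : ℕ} (hbag : ∀ x, (td.bag x).ncard ≤ k + 1)
    (j : ℕ) :
    ∀ (U : Set VH) (r₁ r₂ : ℝ), 0 ≤ r₁ → 0 ≤ r₂ →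
    (U.ncard : ℝ) < r₁ + r₂ →
    ((U.ncard : ℝ) ≤ 2 ^ j * (r₁ + r₂ - U.ncard) ∨
      (r₁ = r₂ ∧ (U.ncard : ℝ) ≤ 3 * (r₁ + r₂ - U.ncard) ∧ 1 ≤ j)) →
    ∃ S A B : Set VH, S ∪ A ∪ B = U ∧ A ⊆ U ∧ B ⊆ U ∧
      (∀ a ∈ A, ∀ b ∈ B, ¬ H.Adj a b) ∧
      S.ncard ≤ j * (k + 1) ∧ (A.ncard : ℝ) ≤ r₁ ∧ (B.ncard : ℝ) ≤ r₂ := by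
  classical
  induction j with
  | zero =>
      intro U r₁ r₂ h1 h2 hslack hcond
      rcases hcond with hcond | ⟨_, _, hj⟩
      · by_cases hr : r₁ ≤ r₂
        · refine ⟨∅, ∅, U, by simp, by simp, le_refl _, by simp, by simp, by simp [h1], ?_⟩
          simp only [pow_zero, one_mul] at hcond
          linarith
        · refine ⟨∅, U, ∅, by simp, le_refl _, by simp, by simp, by simp, ?_, by simp [h2]⟩
          simp only [pow_zero, one_mul] at hcond
          linarith
      · omega
  | succ j ih =>
      intro U r₁ r₂ h1 h2 hslack hcond
      set n := U.ncard with hn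
      obtain ⟨t, hcent⟩ := exists_centroid td U
      set W := U \ td.bag t with hW
      have hWU : W ⊆ U := Set.diff_subset
      have hWn : W.ncard ≤ n := Set.ncard_le_ncard hWU (Set.toFinite _)
      set F : Finset (Set VH) := (Set.toFinite (compSet H W)).toFinset with hF
      have hmemF : ∀ C, C ∈ F ↔ C ∈ compSet H W := by
        intro C; rw [hF, Set.Finite.mem_toFinset]
      have hposF : ∀ C ∈ F, 1 ≤ C.ncard := by
        intro C hC
        have := compSet_nonempty ((hmemF C).mp hC)
        rwa [← Set.ncard_pos (Set.toFinite _)] at this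
      have hdisjF : ∀ C ∈ F, ∀ C' ∈ F, C ≠ C' → Disjoint C C' := by
        intro C hC C' hC' hne
        exact compSet_disjoint ((hmemF C).mp hC) ((hmemF C').mp hC') hne
      have hunionF : ⋃₀ (↑F : Set (Set VH)) = W := by
        rw [hF, Set.Finite.coe_toFinset]; exact compSet_sUnion W
      have hsumF : ∑ C ∈ F, C.ncard = W.ncard := by
        rw [← hunionF, ncard_sUnion_finset F hdisjF]
      have hhalf : ∀ C ∈ F, 2 * C.ncard ≤ n := by
        intro C hC
        obtain ⟨v, hv, rfl⟩ := (hmemF C).mp hC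
        exact hcent v hv
      -- the "slack"
      have hs : (0:ℝ) < r₁ + r₂ - n := by linarith
      have hsum : (∑ C ∈ F, ((Set.ncard C : ℕ) : ℝ)) + (r₁ + r₂ - n) ≤ r₁ + r₂ := by
        have : (∑ C ∈ F, ((Set.ncard C : ℕ) : ℝ)) = ((W.ncard : ℕ) : ℝ) := by
          rw [← hsumF]; push_cast; ring
        rw [this]
        have : (W.ncard : ℝ) ≤ (n : ℝ) := by exact_mod_cast hWn
        linarith
      have hSbag : (U ∩ td.bag t).ncard ≤ k + 1 :=
        le_trans (Set.ncard_le_ncard Set.inter_subset_right (Set.toFinite _)) (hbag t)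
      -- subsets of F are families of disjoint sets with additive ncard
      have hsub_ncard : ∀ P : Finset (Set VH), P ⊆ F →
          ((⋃₀ (↑P : Set (Set VH))).ncard : ℝ) = ∑ C ∈ P, (C.ncard : ℝ) := by
        intro P hP
        rw [ncard_sUnion_finset P (fun C h C' h' hne => hdisjF C (hP h) C' (hP h') hne)]
        push_cast; ring
      have hsub_subW : ∀ P : Finset (Set VH), P ⊆ F → ⋃₀ (↑P : Set (Set VH)) ⊆ W := by
        intro P hP x hx
        obtain ⟨C, hC, hxC⟩ := hx
        exact compSet_subset ((hmemF C).mp (hP hC)) hxC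
      rcases pack F Set.ncard hposF r₁ r₂ (r₁ + r₂ - n) h1 h2 hs hsum with
        ⟨P, hPpow, hP1, hP2⟩ | ⟨c, hcF, P, hPpow, hP1, hP2, hres, hr1lt, hr2lt, hfit⟩
      · -- fully packed
        rw [Finset.mem_powerset] at hPpow
        refine ⟨U ∩ td.bag t, ⋃₀ ↑P, ⋃₀ ↑(F \ P), ?_, ?_, ?_, ?_, ?_, ?_, ?_⟩
        · have hPQ : (↑P : Set (Set VH)) ∪ ↑(F \ P) = ↑F := by
            rw [← Finset.coe_union, Finset.union_sdiff_of_subset hPpow]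
          rw [Set.union_assoc, ← Set.sUnion_union, hPQ, hunionF]
          rw [hW]
          ext x
          simp only [Set.mem_union, Set.mem_inter_iff, Set.mem_diff]
          tauto
        · exact (hsub_subW P hPpow).trans hWU
        · exact (hsub_subW (F \ P) (Finset.sdiff_subset)).trans hWU
        · intro a ha b hb hadj
          simp only [Set.mem_sUnion, Finset.mem_coe] at ha hb
          obtain ⟨C, hC, haC⟩ := ha
          obtain ⟨C', hC', hbC'⟩ := hb
          have hCF := hPpow hC
          have hC'F := (Finset.mem_sdiff.mp hC').1
          have hne : C ≠ C' := by
            rintro rfl; exact (Finset.mem_sdiff.mp hC').2 hC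
          exact compSet_not_adj ((hmemF C).mp hCF) ((hmemF C').mp hC'F) hne haC hbC' hadj
        · calc (U ∩ td.bag t).ncard ≤ k + 1 := hSbag
            _ ≤ (j + 1) * (k + 1) := Nat.le_mul_of_pos_left _ (Nat.succ_pos j)
        · rw [hsub_ncard P hPpow]; exact hP1
        · rw [hsub_ncard (F \ P) (Finset.sdiff_subset)]; exact hP2
      · -- one leftover component c : recurse
        rw [Finset.mem_powerset] at hPpow
        set Q : Finset (Set VH) := (F.erase c) \ P with hQ
        have hPF : P ⊆ F := hPpow.trans (Finset.erase_subset _ _)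
        have hQF : Q ⊆ F := Finset.sdiff_subset.trans (Finset.erase_subset _ _)
        have hcC : c ∈ compSet H W := (hmemF c).mp hcF
        have hcW : c ⊆ W := compSet_subset hcC
        have hcn : 2 * c.ncard ≤ n := hhalf c hcF
        -- capacities for the recursive call
        set sP := ∑ C ∈ P, ((C.ncard : ℕ) : ℝ) with hsP
        set sQ := ∑ C ∈ Q, ((C.ncard : ℕ) : ℝ) with hsQ
        have hρ1 : (0:ℝ) ≤ r₁ - sP := by linarith
        have hρ2 : (0:ℝ) ≤ r₂ - sQ := by linarith
        have hslack' : (c.ncard : ℝ) < (r₁ - sP) + (r₂ - sQ) := by linarith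
        have hcond' : (c.ncard : ℝ) ≤ 2 ^ j * ((r₁ - sP) + (r₂ - sQ) - c.ncard) := by
          have hresid : (c.ncard : ℝ) + (r₁ + r₂ - n) ≤ (r₁ - sP) + (r₂ - sQ) := hres
          have hcnR : 2 * (c.ncard : ℝ) ≤ (n : ℝ) := by exact_mod_cast hcn
          rcases hcond with hmain | ⟨hreq, h3s, _⟩
          · -- main branch
            have h2j : (0:ℝ) < 2 ^ j := by positivity
            have : (2:ℝ) ^ (j + 1) = 2 * 2 ^ j := by ring
            rw [this] at hmain
            nlinarith
          · -- equal-capacity branch: leftover impossible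
            exfalso
            have hcr : (c.ncard : ℝ) ≤ r₁ := by linarith
            have hfitP := hfit hcr
            -- sP + sQ + c ≤ n
            have htot : sP + sQ + (c.ncard : ℝ) ≤ (n : ℝ) := by linarith
            -- r₁ < sP + c ≤ 2 sP
            -- r₂ < sQ + c ≤ n - sP < n - r₁/2
            -- so 3 r₁ / 2 < n ≤ 3(2r₁ - n) gives contradiction
            rw [← hreq] at h3s hr2lt
            linarith
        obtain ⟨S', A', B', hc_eq, hA'c, hB'c, hnadj', hS'n, hA'n, hB'n⟩ :=
          ih c (r₁ - sP) (r₂ - sQ) hρ1 hρ2 hslack' (Or.inl hcond')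
        -- assemble
        have hA'W : A' ⊆ W := hA'c.trans hcW
        have hB'W : B' ⊆ W := hB'c.trans hcW
        have hFeq : (↑P : Set (Set VH)) ∪ ↑Q ∪ {c} = ↑F := by
          have : P ∪ Q ∪ {c} = F := by
            rw [hQ, Finset.union_sdiff_of_subset hPpow]
            ext x
            simp only [Finset.mem_union, Finset.mem_erase, Finset.mem_singleton]
            constructor
            · rintro (⟨_, hx⟩ | rfl) <;> [exact hx; exact hcF]
            · intro hx
              by_cases hxc : x = c
              · right; exact hxc
              · left; exact ⟨hxc, hx⟩
          rw [← this]; push_cast; simp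
        have hWdecomp : W = ⋃₀ (↑P : Set (Set VH)) ∪ ⋃₀ (↑Q : Set (Set VH)) ∪ c := by
          rw [← hunionF, ← hFeq]
          rw [Set.sUnion_union, Set.sUnion_union, Set.sUnion_singleton]
        refine ⟨(U ∩ td.bag t) ∪ S', ⋃₀ ↑P ∪ A', ⋃₀ ↑Q ∪ B', ?_, ?_, ?_, ?_, ?_, ?_, ?_⟩
        · -- coverage
          have hS'U : S' ⊆ U := by
            intro x hx
            have : x ∈ S' ∪ A' ∪ B' := Set.mem_union_left _ (Set.mem_union_left _ hx)
            rw [hc_eq] at this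
            exact hWU (hcW this)
          apply Set.Subset.antisymm
          · apply Set.union_subset
            apply Set.union_subset
            · exact Set.union_subset Set.inter_subset_left hS'U
            · exact Set.union_subset ((hsub_subW P hPF).trans hWU) (hA'W.trans hWU)
            · exact Set.union_subset ((hsub_subW Q hQF).trans hWU) (hB'W.trans hWU)
          · intro x hxU
            simp only [Set.mem_union]
            by_cases hxb : x ∈ td.bag t
            · exact Or.inl (Or.inl (Or.inl ⟨hxU, hxb⟩))
            · have hxW : x ∈ W := ⟨hxU, hxb⟩
              rw [hWdecomp] at hxW
              simp only [Set.mem_union] at hxW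
              rcases hxW with (hx | hx) | hx
              · exact Or.inl (Or.inr (Or.inl hx))
              · exact Or.inr (Or.inl hx)
              · rw [← hc_eq] at hx
                simp only [Set.mem_union] at hx
                rcases hx with (hx | hx) | hx
                · exact Or.inl (Or.inl (Or.inr hx))
                · exact Or.inl (Or.inr (Or.inr hx))
                · exact Or.inr (Or.inr hx)
        · exact Set.union_subset ((hsub_subW P hPF).trans hWU) (hA'W.trans hWU)
        · exact Set.union_subset ((hsub_subW Q hQF).trans hWU) (hB'W.trans hWU)
        · -- nonadjacency
          have hCne : ∀ C ∈ P, C ≠ c := by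
            intro C hC h
            subst h
            exact (Finset.mem_erase.mp (hPpow hC)).1 rfl
          have hC'ne : ∀ C ∈ Q, C ≠ c := by
            intro C hC h
            subst h
            exact (Finset.mem_erase.mp (Finset.mem_sdiff.mp hC).1).1 rfl
          intro a ha b hb hadj
          simp only [Set.mem_union, Set.mem_sUnion, Finset.mem_coe] at ha hb
          rcases ha with ⟨C, hC, haC⟩ | haA'
          · rcases hb with ⟨C', hC', hbC'⟩ | hbB'
            · have hne : C ≠ C' := by
                rintro rfl
                exact (Finset.mem_sdiff.mp hC').2 hC
              exact compSet_not_adj ((hmemF C).mp (hPF hC)) ((hmemF C').mp (hQF hC'))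
                hne haC hbC' hadj
            · exact compSet_not_adj ((hmemF C).mp (hPF hC)) hcC (hCne C hC) haC
                (hB'c hbB') hadj
          · rcases hb with ⟨C', hC', hbC'⟩ | hbB'
            · exact compSet_not_adj hcC ((hmemF C').mp (hQF hC')) (fun h => hC'ne C' hC' h.symm)
                (hA'c haA') hbC' hadj
            · exact hnadj' a haA' b hbB' hadj
        · -- separator size
          calc ((U ∩ td.bag t) ∪ S').ncard ≤ (U ∩ td.bag t).ncard + S'.ncard :=
                Set.ncard_union_le _ _
            _ ≤ (k + 1) + j * (k + 1) := Nat.add_le_add hSbag hS'n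
            _ = (j + 1) * (k + 1) := by ring
        · -- A size
          have := Set.ncard_union_le (⋃₀ (↑P : Set (Set VH))) A'
          have hcast : ((⋃₀ (↑P : Set (Set VH)) ∪ A').ncard : ℝ) ≤
              ((⋃₀ (↑P : Set (Set VH))).ncard : ℝ) + (A'.ncard : ℝ) := by
            exact_mod_cast this
          rw [hsub_ncard P hPF] at hcast
          linarith
        · have := Set.ncard_union_le (⋃₀ (↑Q : Set (Set VH))) B'
          have hcast : ((⋃₀ (↑Q : Set (Set VH)) ∪ B').ncard : ℝ) ≤
              ((⋃₀ (↑Q : Set (Set VH))).ncard : ℝ) + (B'.ncard : ℝ) := by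
            exact_mod_cast this
          rw [hsub_ncard Q hQF] at hcast
          linarith

end Split

variable {w k : ℕ}

theorem q_pos (w : ℕ) : (0:ℝ) < (2/3 : ℝ) ^ w := by positivity
theorem q_le_one (w : ℕ) : (2/3 : ℝ) ^ w ≤ 1 := pow_le_one₀ (by norm_num) (by norm_num)
theorem ratio_pos (w : ℕ) : 0 < ratio w := by
  have := q_pos w; unfold ratio; positivity
theorem gamma_pos (w p : ℕ) : 0 < gammaF w p := pow_pos (ratio_pos w) p
theorem gamma_succ (w p : ℕ) : gammaF w (p+1) = ratio w * gammaF w p := by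
  unfold gammaF; rw [pow_succ]; ring

theorem alpha_succ_pos (w p : ℕ) : 0 < alphaF w (p+1) := by
  have h1 := q_pos w
  have h2 := ratio_pos w
  unfold alphaF
  have : (0:ℝ) < 1 + (2/3:ℝ)^w := by linarith
  positivity

/-- `γ(p+1) = (2+q)·α(p+1)` -/
theorem gamma_eq_alpha (w p : ℕ) :
    gammaF w (p+1) = (2 + (2/3:ℝ)^w) * alphaF w (p+1) := by
  have h1 := q_pos w
  have hne : (1 + (2/3:ℝ)^w) ≠ 0 := by linarith
  unfold gammaF alphaF ratio
  simp only [Nat.add_sub_cancel]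
  rw [pow_succ]
  field_simp

/-- `2γ(p) − γ(p+1) = q·α(p+1)` -/
theorem two_gamma_sub (w p : ℕ) :
    2 * gammaF w p - gammaF w (p+1) = (2/3:ℝ)^w * alphaF w (p+1) := by
  have h1 := q_pos w
  have hne : (1 + (2/3:ℝ)^w) ≠ 0 := by linarith
  unfold gammaF alphaF ratio
  simp only [Nat.add_sub_cancel]
  rw [pow_succ]
  field_simp
  ring

theorem w_ineq (hw : 1 ≤ w) : (2 + (2/3:ℝ)^w) ≤ 2^(w+1) * (2/3:ℝ)^w := by
  have h1 : (2:ℝ)^(w+1) * (2/3:ℝ)^w = 2 * (4/3:ℝ)^w := by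
    rw [pow_succ, mul_comm ((2:ℝ)^w) 2, mul_assoc, ← mul_pow]
    norm_num
  rw [h1]
  have h2 : (4/3:ℝ)^1 ≤ (4/3:ℝ)^w := pow_le_pow_right₀ (by norm_num) hw
  have h3 : (2/3:ℝ)^w ≤ (2/3:ℝ)^1 := pow_le_pow_of_le_one (by norm_num) (by norm_num) hw
  simp at h2 h3
  linarith

/-- base case bound: `γ(p₀) ≤ δ` -/
theorem gamma_base_le (k w : ℕ) : gammaF w (pWK k w) ≤ deltaK k w := by
  have hq := q_pos w
  have hq1 := q_le_one w
  have h32 : (1:ℝ) ≤ (3/2:ℝ)^w := one_le_pow₀ (by norm_num)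
  have hbK : (8:ℝ) ≤ deltaK k w := by
    unfold deltaK betaK
    have hk0 : (0:ℝ) ≤ (k:ℝ) := Nat.cast_nonneg k
    have e1 : (4:ℝ) ≤ (2*(k:ℝ)+4)*(3/2)^w := by nlinarith
    nlinarith [e1, q_pos w]
  rcases Nat.eq_zero_or_pos (pWK k w) with h0 | hpos
  · rw [h0]; unfold gammaF; simp; linarith
  · have hnotmem : (pWK k w - 1) ∉ {p : ℕ | betaK k w ≤ alphaF w (p + 1)} := by
      apply Nat.notMem_of_lt_sInf
      have : pWK k w = sInf {p : ℕ | betaK k w ≤ alphaF w (p + 1)} := rfl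
      omega
    simp only [Set.mem_setOf_eq, not_le] at hnotmem
    have hsub : pWK k w - 1 + 1 = pWK k w := Nat.succ_pred_eq_of_pos hpos
    rw [hsub] at hnotmem
    -- alphaF w (pWK) < betaK
    have heq : gammaF w (pWK k w) = (2 + (2/3:ℝ)^w) * alphaF w (pWK k w) := by
      have := gamma_eq_alpha w (pWK k w - 1)
      rw [hsub] at this
      exact this
    rw [heq]
    unfold deltaK
    have h2q : (0:ℝ) < 2 + (2/3:ℝ)^w := by linarith
    nlinarith [hnotmem]


section JGraphFacts
variable {a b : ℕ}

theorem jvert_nonempty (a : ℕ) {b : ℕ} (hb : 0 < b) : ∀ m, Nonempty (JVert a b m)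
  | 0 => ⟨(⟨0, hb⟩ : Fin b)⟩
  | m + 1 => by
      obtain ⟨x⟩ := jvert_nonempty a hb m
      exact ⟨Sum.inr (Sum.inl x)⟩

theorem jgraph_zero_adj {x y : JVert a b 0} (hne : x ≠ y) : (JGraph a b 0).Adj x y := by
  show (⊤ : SimpleGraph (JVert a b 0)).Adj x y
  simpa using hne

theorem jadj_inl {m : ℕ} (x : Fin a) (y : JVert a b (m+1)) (hne : Sum.inl x ≠ y) :
    (JGraph a b (m+1)).Adj (Sum.inl x) y := by
  show (SimpleGraph.fromRel _).Adj _ _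
  apply (SimpleGraph.fromRel_adj _ _ _).mpr
  rcases y with y | (y | y)
  · exact ⟨hne, Or.inl trivial⟩
  · exact ⟨hne, Or.inl trivial⟩
  · exact ⟨hne, Or.inl trivial⟩

theorem jadj_inr_inl {m : ℕ} {x y : JVert a b m} (h : (JGraph a b m).Adj x y) :
    (JGraph a b (m+1)).Adj (Sum.inr (Sum.inl x)) (Sum.inr (Sum.inl y)) := by
  show (SimpleGraph.fromRel _).Adj _ _
  apply (SimpleGraph.fromRel_adj _ _ _).mpr
  exact ⟨fun heq => h.ne (Sum.inl_injective (Sum.inr_injective heq)), Or.inl h⟩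

theorem jadj_inr_inr {m : ℕ} {x y : JVert a b m} (h : (JGraph a b m).Adj x y) :
    (JGraph a b (m+1)).Adj (Sum.inr (Sum.inr x)) (Sum.inr (Sum.inr y)) := by
  show (SimpleGraph.fromRel _).Adj _ _
  apply (SimpleGraph.fromRel_adj _ _ _).mpr
  exact ⟨fun heq => h.ne (Sum.inr_injective (Sum.inr_injective heq)), Or.inl h⟩

end JGraphFacts

section Emb
variable {VH ι : Type} [Fintype VH] {H : SimpleGraph VH} {T : SimpleGraph ι}

/-- injection of a small set into `Fin N` -/
theorem small_inj (U' : Set VH) {N : ℕ} (h : U'.ncard ≤ N) :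
    ∃ g : ↥U' → Fin N, Function.Injective g := by
  have : Fintype ↥U' := (Set.toFinite U').fintype
  have hcard : Fintype.card ↥U' ≤ Fintype.card (Fin N) := by
    rw [Fintype.card_fin]
    rw [← Nat.card_eq_fintype_card, Nat.card_coe_set_eq]
    exact h
  obtain ⟨e⟩ := Function.Embedding.nonempty_iff_card_le.mpr hcard
  exact ⟨e, e.injective⟩

theorem emb (w k : ℕ) (td : TreeDecomp H T) (hbag : ∀ x, (td.bag x).ncard ≤ k + 1) :
    ∀ (m : ℕ) (U : Set VH), (U.ncard : ℝ) ≤ gammaF w (pWK k w + m) →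
    ∃ f : VH → JVert ((k+1)*(w+1)) ⌈deltaK k w⌉₊ m,
      Set.InjOn f U ∧
      ∀ u ∈ U, ∀ v ∈ U, H.Adj u v → (JGraph ((k+1)*(w+1)) ⌈deltaK k w⌉₊ m).Adj (f u) (f v) := by
  classical
  have hq := q_pos w
  have hb : 0 < ⌈deltaK k w⌉₊ := by
    rw [Nat.ceil_pos]
    have h32 : (1:ℝ) ≤ (3/2:ℝ)^w := one_le_pow₀ (by norm_num)
    have hk0 : (0:ℝ) ≤ (k:ℝ) := Nat.cast_nonneg k
    unfold deltaK betaK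
    positivity
  intro m
  induction m with
  | zero =>
      intro U hU
      -- U fits in the base clique
      have hUb : U.ncard ≤ ⌈deltaK k w⌉₊ := by
        have h1 : (U.ncard : ℝ) ≤ deltaK k w := by
          have := gamma_base_le k w
          simpa using le_trans hU this
        have h2 : deltaK k w ≤ (⌈deltaK k w⌉₊ : ℝ) := Nat.le_ceil _
        exact_mod_cast le_trans h1 h2
      obtain ⟨g, hg⟩ := small_inj U hUb
      obtain ⟨jk⟩ := jvert_nonempty ((k+1)*(w+1)) hb 0
      set f : VH → JVert ((k+1)*(w+1)) ⌈deltaK k w⌉₊ 0 := fun v =>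
        if h : v ∈ U then (g ⟨v, h⟩ : JVert ((k+1)*(w+1)) ⌈deltaK k w⌉₊ 0) else jk with hfdef
      have hfU : ∀ x (h : x ∈ U), f x = g ⟨x, h⟩ := by
        intro x h; simp only [hfdef]; exact dif_pos h
      refine ⟨f, ?_, ?_⟩
      · intro u hu v hv heq
        rw [hfU u hu, hfU v hv] at heq
        have := hg heq
        exact congrArg Subtype.val this
      · intro u hu v hv hadj
        apply jgraph_zero_adj
        rw [hfU u hu, hfU v hv]
        intro heq
        exact hadj.ne (congrArg Subtype.val (hg heq))
  | succ m ih =>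
      intro U hU
      set p := pWK k w + m with hp
      set r := gammaF w p with hr
      have hrpos : 0 < r := gamma_pos w p
      have hα := alpha_succ_pos w p
      have hγ1 : gammaF w (p+1) = (2 + (2/3:ℝ)^w) * alphaF w (p+1) := gamma_eq_alpha w p
      have hγ2 : 2 * r - gammaF w (p+1) = (2/3:ℝ)^w * alphaF w (p+1) := two_gamma_sub w p
      have hU' : (U.ncard : ℝ) ≤ gammaF w (p+1) := by
        have : pWK k w + (m+1) = p + 1 := by omega
        rw [this] at hU; exact hU
      have hslack : (U.ncard : ℝ) < r + r := by nlinarith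
      have hcond : (U.ncard : ℝ) ≤ 2 ^ (w+1) * (r + r - U.ncard) ∨
          (r = r ∧ (U.ncard : ℝ) ≤ 3 * (r + r - U.ncard) ∧ 1 ≤ w + 1) := by
        rcases Nat.eq_zero_or_pos w with hw0 | hw1
        · right
          refine ⟨rfl, ?_, by omega⟩
          subst hw0
          simp only [pow_zero] at hγ1 hγ2 hq
          nlinarith
        · left
          have hwin := w_ineq hw1
          have h2pow : (0:ℝ) < 2^(w+1) := by positivity
          nlinarith
      obtain ⟨S, A, B, hcover, hAU, hBU, hnadj, hSn, hAn, hBn⟩ :=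
        split td hbag (w+1) U r r (le_of_lt hrpos) (le_of_lt hrpos) hslack hcond
      -- separator into the clique
      have hScard : S.ncard ≤ (k+1)*(w+1) := by
        calc S.ncard ≤ (w+1) * (k+1) := hSn
          _ = (k+1)*(w+1) := Nat.mul_comm _ _
      obtain ⟨g, hg⟩ := small_inj S hScard
      obtain ⟨fA, hfAinj, hfAadj⟩ := ih A hAn
      obtain ⟨fB, hfBinj, hfBadj⟩ := ih B hBn
      obtain ⟨jk⟩ := jvert_nonempty ((k+1)*(w+1)) hb (m+1)
      set f : VH → JVert ((k+1)*(w+1)) ⌈deltaK k w⌉₊ (m+1) := fun v =>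
        if hS : v ∈ S then Sum.inl (g ⟨v, hS⟩)
        else if hA : v ∈ A then Sum.inr (Sum.inl (fA v))
        else if hB : v ∈ B then Sum.inr (Sum.inr (fB v))
        else jk with hfdef
      have htri : ∀ x ∈ U, x ∈ S ∨ (x ∉ S ∧ x ∈ A) ∨ (x ∉ S ∧ x ∉ A ∧ x ∈ B) := by
        intro x hx
        by_cases h1 : x ∈ S
        · exact Or.inl h1
        by_cases h2 : x ∈ A
        · exact Or.inr (Or.inl ⟨h1, h2⟩)
        have : x ∈ S ∪ A ∪ B := by rw [hcover]; exact hx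
        rcases this with (h | h) | h
        · exact absurd h h1
        · exact absurd h h2
        · exact Or.inr (Or.inr ⟨h1, h2, h⟩)
      have hfS : ∀ x (h : x ∈ S), f x = Sum.inl (g ⟨x, h⟩) := by
        intro x h; simp only [hfdef]; exact dif_pos h
      have hfA : ∀ x, x ∉ S → x ∈ A → f x = Sum.inr (Sum.inl (fA x)) := by
        intro x h1 h2; simp only [hfdef]; exact (dif_neg h1).trans (dif_pos h2)
      have hfB : ∀ x, x ∉ S → x ∉ A → x ∈ B → f x = Sum.inr (Sum.inr (fB x)) := by
        intro x h1 h2 h3; simp only [hfdef]; exact (dif_neg h1).trans ((dif_neg h2).trans (dif_pos h3))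
      refine ⟨f, ?_, ?_⟩
      · -- injectivity
        intro u hu v hv heq
        rcases htri u hu with hu1 | ⟨hu1, hu2⟩ | ⟨hu1, hu2, hu3⟩ <;>
          rcases htri v hv with hv1 | ⟨hv1, hv2⟩ | ⟨hv1, hv2, hv3⟩
        · rw [hfS u hu1, hfS v hv1] at heq
          have := hg (Sum.inl_injective heq)
          exact congrArg Subtype.val this
        · rw [hfS u hu1, hfA v hv1 hv2] at heq; exact (Sum.inl_ne_inr heq).elim
        · rw [hfS u hu1, hfB v hv1 hv2 hv3] at heq; exact (Sum.inl_ne_inr heq).elim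
        · rw [hfA u hu1 hu2, hfS v hv1] at heq; exact (Sum.inr_ne_inl heq).elim
        · rw [hfA u hu1 hu2, hfA v hv1 hv2] at heq
          exact hfAinj hu2 hv2 (Sum.inl_injective (Sum.inr_injective heq))
        · rw [hfA u hu1 hu2, hfB v hv1 hv2 hv3] at heq; exact (Sum.inl_ne_inr (Sum.inr_injective heq)).elim
        · rw [hfB u hu1 hu2 hu3, hfS v hv1] at heq; exact (Sum.inr_ne_inl heq).elim
        · rw [hfB u hu1 hu2 hu3, hfA v hv1 hv2] at heq; exact (Sum.inr_ne_inl (Sum.inr_injective heq)).elim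
        · rw [hfB u hu1 hu2 hu3, hfB v hv1 hv2 hv3] at heq
          exact hfBinj hu3 hv3 (Sum.inr_injective (Sum.inr_injective heq))
      · -- adjacency
        intro u hu v hv hadj
        have hune : u ≠ v := hadj.ne
        -- f u ≠ f v from injectivity shape: we prove ad hoc in each case
        rcases htri u hu with hu1 | ⟨hu1, hu2⟩ | ⟨hu1, hu2, hu3⟩ <;>
          rcases htri v hv with hv1 | ⟨hv1, hv2⟩ | ⟨hv1, hv2, hv3⟩
        · rw [hfS u hu1, hfS v hv1]
          apply jadj_inl
          intro heq
          exact hune (congrArg Subtype.val (hg (Sum.inl_injective heq)))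
        · rw [hfS u hu1, hfA v hv1 hv2]
          exact jadj_inl _ _ Sum.inl_ne_inr
        · rw [hfS u hu1, hfB v hv1 hv2 hv3]
          exact jadj_inl _ _ Sum.inl_ne_inr
        · rw [hfA u hu1 hu2, hfS v hv1]
          exact (jadj_inl _ _ Sum.inl_ne_inr).symm
        · rw [hfA u hu1 hu2, hfA v hv1 hv2]
          exact jadj_inr_inl (hfAadj u hu2 v hv2 hadj)
        · exact absurd hadj (hnadj u hu2 v hv3)
        · rw [hfB u hu1 hu2 hu3, hfS v hv1]
          exact (jadj_inl _ _ Sum.inl_ne_inr).symm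
        · exact absurd hadj.symm (hnadj v hv2 u hu3)
        · rw [hfB u hu1 hu2 hu3, hfB v hv1 hv2 hv3]
          exact jadj_inr_inr (hfBadj u hu3 v hv3 hadj)

end Emb

end UnivProof

theorem statement_16 (w k p : ℕ) (hk : 1 ≤ k) (hp : pWK k w ≤ p)
    {VH : Type} [Fintype VH] (H : SimpleGraph VH)
    (hcard : (Nat.card VH : ℝ) ≤ gammaF w p) (htw : HasTreewidthLE H k) :
    Contains (Gkwp k w p) H := by
  classical
  obtain ⟨ι, T, td, hbag⟩ := htw
  have hm : pWK k w + (p - pWK k w) = p := by omega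
  have hU : ((Set.univ : Set VH).ncard : ℝ) ≤ gammaF w (pWK k w + (p - pWK k w)) := by
    rw [hm, Set.ncard_univ]
    exact hcard
  obtain ⟨f, hfinj, hfadj⟩ := UnivProof.emb w k td hbag (p - pWK k w) Set.univ hU
  refine ⟨⟨f, ?_⟩, ?_⟩
  · intro u v hadj
    exact hfadj u (Set.mem_univ u) v (Set.mem_univ v) hadj
  · intro u v heq
    exact hfinj (Set.mem_univ u) (Set.mem_univ v) heq
end

section
/- For every integer k ≥ 1 there exists an integer W₀(k) such that for all integers w ≥ W₀(k) and all integers p ≥ p_{w,k}, the graph G^k_{w,p} has at most 5·2^p vertices. -/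
open SimpleGraph

instance finite_JVert (a b : ℕ) : ∀ m, Finite (JVert a b m)
  | 0 => by unfold JVert; infer_instance
  | m + 1 => by
      have := finite_JVert a b m
      unfold JVert; infer_instance

lemma card_JVert (a b : ℕ) : ∀ m, Nat.card (JVert a b m) = 2 ^ m * (a + b) - a
  | 0 => by simp [JVert]
  | m + 1 => by
      have ih := card_JVert a b m
      have h1 : (1 : ℕ) ≤ 2 ^ m := Nat.one_le_two_pow
      have ha : a ≤ 2 ^ m * (a + b) := by nlinarith
      show Nat.card (Fin a ⊕ (JVert a b m ⊕ JVert a b m)) = _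
      rw [Nat.card_sum, Nat.card_sum, Nat.card_eq_fintype_card, Fintype.card_fin, ih,
        pow_succ, mul_comm (2 ^ m) 2, mul_assoc]
      set u := 2 ^ m * (a + b)
      omega

lemma key_ineq (k w : ℕ) (hk : 1 ≤ k) :
    (k + 1) * (w + 1) + ⌈deltaK k w⌉₊ ≤ 5 * 2 ^ (pWK k w) := by
  set e : ℝ := (2/3 : ℝ) ^ w with he
  have he0 : 0 < e := by positivity
  have he1 : e ≤ 1 := pow_le_one₀ (by norm_num) (by norm_num)
  have hr1 : (1 : ℝ) < ratio w := by
    rw [ratio]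
    rw [lt_div_iff₀ (by positivity)]
    linarith
  have hr2 : ratio w ≤ 2 := by
    rw [ratio, div_le_iff₀ (by positivity)]
    linarith
  have hbK : (0 : ℝ) < betaK k w := by
    rw [betaK]; positivity
  -- nonemptiness of the set defining pWK
  have hne : {p : ℕ | betaK k w ≤ alphaF w (p + 1)}.Nonempty := by
    obtain ⟨n, hn⟩ := pow_unbounded_of_one_lt (betaK k w * (1 + e)) hr1
    refine ⟨n, ?_⟩
    show betaK k w ≤ alphaF w (n + 1)
    have hα : alphaF w (n + 1) = (1 / (1 + e)) * ratio w ^ n := by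
      rw [alphaF]; norm_num [he]
    rw [hα, mul_comm, mul_one_div, le_div_iff₀ (by positivity)]
    exact hn.le
  have hmem := Nat.sInf_mem hne
  rw [pWK] at *
  set p₀ := sInf {p : ℕ | betaK k w ≤ alphaF w (p + 1)} with hp₀
  have halpha : alphaF w (p₀ + 1) ≤ 2 ^ p₀ := by
    rw [alphaF]
    simp only [Nat.add_sub_cancel]
    have h1 : (1 : ℝ) / (1 + e) ≤ 1 := by
      rw [div_le_one (by positivity)]; linarith
    have h2 : ratio w ^ p₀ ≤ 2 ^ p₀ := pow_le_pow_left₀ (le_of_lt (lt_trans one_pos hr1)) hr2 p₀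
    calc (1 / (1 + e)) * ratio w ^ p₀ ≤ 1 * (2 : ℝ) ^ p₀ := by
          apply mul_le_mul h1 h2 (by positivity) one_pos.le
      _ = 2 ^ p₀ := one_mul _
  have hbeta2 : betaK k w ≤ (2 : ℝ) ^ p₀ := le_trans hmem halpha
  -- δK ≤ 3 βK
  have hdelta : deltaK k w ≤ 3 * betaK k w := by
    rw [deltaK]; nlinarith
  have hd0 : (0 : ℝ) ≤ deltaK k w := by
    rw [deltaK]; nlinarith
  have hceil : (⌈deltaK k w⌉₊ : ℝ) < deltaK k w + 1 := Nat.ceil_lt_add_one hd0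
  -- (k+1)(w+1) + 1 ≤ 2 βK
  have hpow32 : 1 + (w : ℝ) * (1/2) ≤ (3/2 : ℝ) ^ w := by
    have := one_add_mul_le_pow (a := (1/2 : ℝ)) (by norm_num) w
    calc 1 + (w : ℝ) * (1/2) = 1 + (w : ℝ) * (1/2) := rfl
      _ ≤ (1 + 1/2) ^ w := this
      _ = (3/2 : ℝ) ^ w := by norm_num
  have hk' : (1 : ℝ) ≤ k := by exact_mod_cast hk
  have hlin : ((k : ℝ) + 1) * (w + 1) + 1 ≤ 2 * betaK k w := by
    rw [betaK]
    nlinarith [hpow32, (Nat.cast_nonneg w : (0:ℝ) ≤ w)]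
  -- combine, as reals
  have hfinal : ((k : ℝ) + 1) * (w + 1) + (⌈deltaK k w⌉₊ : ℝ) ≤ 5 * 2 ^ p₀ := by
    nlinarith
  have : (((k + 1) * (w + 1) + ⌈deltaK k w⌉₊ : ℕ) : ℝ) ≤ ((5 * 2 ^ p₀ : ℕ) : ℝ) := by
    push_cast
    convert hfinal using 2 <;> push_cast <;> ring
  exact_mod_cast this

theorem statement_17 (k : ℕ) (hk : 1 ≤ k) :
    ∃ W₀ : ℕ, ∀ w : ℕ, W₀ ≤ w → ∀ p : ℕ, pWK k w ≤ p →
      Nat.card (GkwpVert k w p) ≤ 5 * 2 ^ p := by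
  refine ⟨0, fun w _ p hp => ?_⟩
  have hcard : Nat.card (GkwpVert k w p)
      = 2 ^ (p - pWK k w) * ((k + 1) * (w + 1) + ⌈deltaK k w⌉₊) - (k + 1) * (w + 1) :=
    card_JVert _ _ _
  have hkey := key_ineq k w hk
  calc Nat.card (GkwpVert k w p)
      ≤ 2 ^ (p - pWK k w) * ((k + 1) * (w + 1) + ⌈deltaK k w⌉₊) := by
        rw [hcard]; exact Nat.sub_le _ _
    _ ≤ 2 ^ (p - pWK k w) * (5 * 2 ^ (pWK k w)) :=
        Nat.mul_le_mul_left _ hkey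
    _ = 5 * 2 ^ (p - pWK k w + pWK k w) := by ring
    _ = 5 * 2 ^ p := by rw [Nat.sub_add_cancel hp]
end
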